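/- Let f be a norm on ℝ^p with dual norm f*, let a ∈ ℝ^p with a ≠ 0, and b ∈ ℝ. For x ∈ ℝ^p define d_x := (b − ⟪a, x⟫) / f*(a). Let v ∈ ℝ^p be such that {v, v², …, v^p} is a basis of ℝ^p (so v ≠ 0), and define the counterfactual points v_CF := v + d_v • v and v^i_CF := v^i + d_{v^i} • v for i = 2, …, p. If v_CF = 0, then the family {v²_CF, …, v^p_CF} is linearly independent. -/
import Mathlib


open Finset

noncomputable section

/-- The standard inner product on `Fin p → ℝ`. -/
def dot {p : ℕ} (a x : Fin p → ℝ) : ℝ := ∑ k, a k * x k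

/-- `f` is a norm on `ℝ^p`. -/
def IsNorm {p : ℕ} (f : (Fin p → ℝ) → ℝ) : Prop :=
  (∀ x, f x = 0 ↔ x = 0) ∧ (∀ (c : ℝ) (x : Fin p → ℝ), f (c • x) = |c| * f x) ∧
    (∀ x y, f (x + y) ≤ f x + f y)

/-- The dual norm `f*(w) = sup { ⟪w, v⟫ : f v ≤ 1 }`. -/
def dualNorm {p : ℕ} (f : (Fin p → ℝ) → ℝ) (w : Fin p → ℝ) : ℝ :=
  sSup {t : ℝ | ∃ v : Fin p → ℝ, f v ≤ 1 ∧ t = dot w v}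

/-- `xCF` is an optimal counterfactual of the factual `xF` (classified 'No') under norm `f`. -/
def IsOptCF {p : ℕ} (a : Fin p → ℝ) (b : ℝ) (f : (Fin p → ℝ) → ℝ)
    (xF xCF : Fin p → ℝ) : Prop :=
  b ≤ dot a xCF ∧ ∀ z : Fin p → ℝ, b ≤ dot a z → f (xCF - xF) ≤ f (z - xF)

/-- `xRCF` is an optimal robust counterfactual of the factual `xF` (classified 'No')
under norm `f`, with robustness norm `g` and radius `ρ`. -/
def IsOptRCF {p : ℕ} (a : Fin p → ℝ) (b : ℝ) (f g : (Fin p → ℝ) → ℝ) (ρ : ℝ)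
    (xF xRCF : Fin p → ℝ) : Prop :=
  (∀ s : Fin p → ℝ, g s ≤ ρ → b ≤ dot a (xRCF + s)) ∧
    ∀ z : Fin p → ℝ, (∀ s : Fin p → ℝ, g s ≤ ρ → b ≤ dot a (z + s)) →
      f (xRCF - xF) ≤ f (z - xF)

/-- `w` is a subgradient of `f` at `x₀`. -/
def IsSubgradient {p : ℕ} (f : (Fin p → ℝ) → ℝ) (x₀ w : Fin p → ℝ) : Prop :=
  ∀ y : Fin p → ℝ, f x₀ + dot w (y - x₀) ≤ f y

/-- Lemma 3(ii): if `w` is a basis of `ℝ^p` with first vector `v = w ⟨0, hp⟩`, and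
`c i = w i + d_{w i} • v` are the counterfactual points with
`d_x = (b − ⟪a, x⟫)/f*(a)`, and the counterfactual of `v` itself is zero, then the
remaining counterfactuals `{c i : i ≠ ⟨0, hp⟩}` are linearly independent. -/
theorem cf_basis_independent_zero {p : ℕ} (hp : 1 ≤ p)
    (f : (Fin p → ℝ) → ℝ) (hf : IsNorm f)
    (a : Fin p → ℝ) (ha : a ≠ 0) (b : ℝ)
    (w : Fin p → (Fin p → ℝ))
    (hli : LinearIndependent ℝ w)
    (hspan : ⊤ ≤ Submodule.span ℝ (Set.range w))
    (c : Fin p → (Fin p → ℝ))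
    (hc : ∀ i, c i = w i + ((b - dot a (w i)) / dualNorm f a) • w ⟨0, hp⟩)
    (h0 : c ⟨0, hp⟩ = 0) :
    LinearIndependent ℝ (fun i : {j : Fin p // j ≠ ⟨0, hp⟩} => c i.1) := by
  classical
  rw [Fintype.linearIndependent_iff]
  intro g hg
  have hg' : (∑ i : {j : Fin p // j ≠ ⟨0, hp⟩}, g i • w i.1)
      + (∑ i : {j : Fin p // j ≠ ⟨0, hp⟩},
          g i * ((b - dot a (w i.1)) / dualNorm f a)) • w ⟨0, hp⟩ = 0 := by
    rw [Finset.sum_smul, ← Finset.sum_add_distrib, ← hg]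
    refine Finset.sum_congr rfl fun i _ => ?_
    rw [hc, smul_add, smul_smul]
  have key : ∑ j, (fun j => if h : j = ⟨0, hp⟩
      then ∑ i : {j : Fin p // j ≠ ⟨0, hp⟩}, g i * ((b - dot a (w i.1)) / dualNorm f a)
      else g ⟨j, h⟩) j • w j = 0 := by
    rw [← Finset.add_sum_erase _ _ (Finset.mem_univ ⟨0, hp⟩)]
    have h2 : ∑ j ∈ Finset.univ.erase ⟨0, hp⟩, (fun j => if h : j = ⟨0, hp⟩
        then ∑ i : {j : Fin p // j ≠ ⟨0, hp⟩}, g i * ((b - dot a (w i.1)) / dualNorm f a)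
        else g ⟨j, h⟩) j • w j
        = ∑ i : {j : Fin p // j ≠ ⟨0, hp⟩}, g i • w i.1 := by
      rw [Finset.sum_subtype (p := fun j => j ≠ (⟨0, hp⟩ : Fin p)) _ (by intro x; simp)]
      refine Finset.sum_congr rfl fun i _ => ?_
      simp [i.2]
    rw [h2]
    simp only [dif_pos rfl]
    rw [add_comm]
    exact hg'
  have hz' := Fintype.linearIndependent_iff.mp hli _ key
  intro i
  have h := hz' i.1
  simpa [i.2] using h
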